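/- Let R be a unital 2- and 3-torsion free alternative ring with a nontrivial idempotent e_1, e_2 = 1 − e_1, satisfying: for each i ∈ {1,2}, if x ∈ R has (x r)e_i = 0 for all r ∈ R, then x = 0. Let φ : R → R be an additive commuting map. Then for all i ≠ j in {1,2} and every x_ij ∈ R_ij: [e_i φ(x_ij) e_i + e_j φ(x_ij) e_j, x_ij] = 0. -/

import Mathlib

/-- The pair of Peirce idempotents associated to an idempotent `e`:
`peirceE e 0 = e₁ = e` and `peirceE e 1 = e₂ = 1 - e`. -/
def peirceE {R : Type*} [NonAssocRing R] (e : R) (i : Fin 2) : R :=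
  if i = 0 then e else 1 - e

/-- The Peirce component `R_ij = eᵢ R eⱼ` of a unital alternative ring relative
to the idempotent `e` (indices `0, 1` standing for `1, 2`). -/
def peirceSet {R : Type*} [NonAssocRing R] (e : R) (i j : Fin 2) : Set R :=
  {x : R | ∃ a : R, x = peirceE e i * (a * peirceE e j)}

/-!
Relative to the idempotent `u = eᵢ`, split `c = φ x` into its Peirce components
`p ∈ R₁₁, q ∈ R₂₁, r ∈ R₁₂, s ∈ R₂₂` and let `x ∈ R₁₂`. The linearized alternative laws
determine the Peirce space of every product of Peirce elements; in particular
`s x ∈ R₂₂ R₁₂` and `x p ∈ R₁₂ R₁₁` land in "eigenvalue `-1` or `2`" spaces, which vanish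
in a 2-torsion free ring. Projecting `c x = x c` onto `R₁₂` leaves `p x = x s`, hence
`(p + s) x = p x = x s = x (p + s)`.
-/

section Alternative

variable {R : Type*} [NonAssocRing R]

theorem linearized_left_alternative (alt1 : ∀ x y : R, x * x * y = x * (x * y)) (a b c : R) :
    a * b * c + b * a * c = a * (b * c) + b * (a * c) := by
  have h := alt1 (a + b) c
  simp only [add_mul, mul_add, alt1 a c, alt1 b c] at h
  rw [← sub_eq_zero] at h ⊢
  rw [← h]
  abel

theorem linearized_right_alternative (alt2 : ∀ x y : R, y * x * x = y * (x * x)) (y a b : R) :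
    y * a * b + y * b * a = y * (a * b) + y * (b * a) := by
  have h := alt2 (a + b) y
  simp only [add_mul, mul_add, alt2 a y, alt2 b y] at h
  rw [← sub_eq_zero] at h ⊢
  rw [← h]
  abel

theorem flexible_of_alternative (alt1 : ∀ x y : R, x * x * y = x * (x * y))
    (alt2 : ∀ x y : R, y * x * x = y * (x * x)) (u z : R) :
    u * z * u = u * (z * u) := by
  have h := linearized_left_alternative alt1 u z u
  rw [alt2] at h
  exact add_right_cancel h

theorem mul_one_sub_mul_idem (alt2 : ∀ x y : R, y * x * x = y * (x * x)) {u : R}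
    (hu : u * u = u) (z : R) : z * (1 - u) * u = 0 := by
  rw [mul_sub, mul_one, sub_mul, alt2, hu, sub_self]

theorem peirce_decomposition (u z : R) :
    u * (z * u) + (1 - u) * (z * u) + u * (z * (1 - u)) + (1 - u) * (z * (1 - u)) = z := by
  simp only [sub_mul, mul_sub, one_mul, mul_one]
  abel

/-- For an idempotent `u`, the Peirce spaces `R₁₁, R₁₂, R₂₁, R₂₂` are `IsPeirce u a b` with
`(a, b) = (1, 1), (1, 0), (0, 1), (0, 0)`. -/
def IsPeirce (u : R) (a b : ℤ) (y : R) : Prop :=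
  u * y = a • y ∧ y * u = b • y

theorem IsPeirce.mul (alt1 : ∀ x y : R, x * x * y = x * (x * y))
    (alt2 : ∀ x y : R, y * x * x = y * (x * x)) {u y z : R} {a b c d : ℤ}
    (hy : IsPeirce u a b y) (hz : IsPeirce u c d z) :
    IsPeirce u (a + b - c) (c + d - b) (y * z) := by
  have hl := linearized_left_alternative alt1 u y z
  have hr := linearized_right_alternative alt2 y z u
  simp only [hy.1, hy.2, hz.1, hz.2, smul_mul_assoc, mul_smul_comm] at hl hr
  constructor
  · rw [sub_smul, add_smul, hl]
    abel
  · rw [sub_smul, add_smul, add_comm (c • (y * z)), ← hr]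
    abel

theorem IsPeirce.eq_zero_of_left (alt1 : ∀ x y : R, x * x * y = x * (x * y))
    (tor2 : ∀ x : R, (2 : ℕ) • x = 0 → x = 0) {u y : R} {a b : ℤ} (hu : u * u = u)
    (hy : IsPeirce u a b y) (ha : a * a - a = 2) : y = 0 := by
  have h : u * (u * y) = u * y := by rw [← alt1, hu]
  rw [hy.1, mul_smul_comm, hy.1, smul_smul] at h
  apply tor2
  rw [← ofNat_smul_eq_nsmul ℤ, ← ha, sub_smul, h, sub_self]

theorem IsPeirce.eq_zero_of_right (alt2 : ∀ x y : R, y * x * x = y * (x * x))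
    (tor2 : ∀ x : R, (2 : ℕ) • x = 0 → x = 0) {u y : R} {a b : ℤ} (hu : u * u = u)
    (hy : IsPeirce u a b y) (hb : b * b - b = 2) : y = 0 := by
  have h : y * u * u = y * u := by rw [alt2, hu]
  rw [hy.2, smul_mul_assoc, hy.2, smul_smul] at h
  apply tor2
  rw [← ofNat_smul_eq_nsmul ℤ, ← hb, sub_smul, h, sub_self]

theorem isPeirce_idem_mul (alt1 : ∀ x y : R, x * x * y = x * (x * y))
    (alt2 : ∀ x y : R, y * x * x = y * (x * x)) {u w : R} {b : ℤ} (hu : u * u = u)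
    (hw : w * u = b • w) : IsPeirce u 1 b (u * w) :=
  ⟨by rw [one_smul, ← alt1, hu], by rw [flexible_of_alternative alt1 alt2, hw, mul_smul_comm]⟩

theorem isPeirce_one_sub_idem_mul (alt1 : ∀ x y : R, x * x * y = x * (x * y))
    (alt2 : ∀ x y : R, y * x * x = y * (x * x)) {u w : R} {b : ℤ} (hu : u * u = u)
    (hw : w * u = b • w) : IsPeirce u 0 b ((1 - u) * w) := by
  simp only [IsPeirce, sub_mul, one_mul, mul_sub, zero_smul]
  constructor
  · rw [← alt1, hu, sub_self]
  · rw [flexible_of_alternative alt1 alt2, hw, mul_smul_comm, smul_sub]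

/-- `u * (y - y * u)` is the `R₁₂`-component of `y`. -/
def peirceProj₁₂ (u : R) : R →+ R :=
  (AddMonoidHom.mulLeft u).comp (AddMonoidHom.id R - AddMonoidHom.mulRight u)

theorem IsPeirce.peirceProj₁₂_eq {u y : R} {a b : ℤ} (hy : IsPeirce u a b y) :
    peirceProj₁₂ u y = (a - b * a) • y := by
  change u * (y - y * u) = _
  rw [hy.2, mul_sub, mul_smul_comm, hy.1, smul_smul, sub_smul]

theorem commute_peirce_diag_of_commute (alt1 : ∀ x y : R, x * x * y = x * (x * y))
    (alt2 : ∀ x y : R, y * x * x = y * (x * x)) (tor2 : ∀ x : R, (2 : ℕ) • x = 0 → x = 0)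
    {u c x : R} (hu : u * u = u) (hx : IsPeirce u 1 0 x) (hcx : c * x = x * c) :
    (u * (c * u) + (1 - u) * (c * (1 - u))) * x =
      x * (u * (c * u) + (1 - u) * (c * (1 - u))) := by
  have hcu : c * u * u = (1 : ℤ) • (c * u) := by rw [one_smul, alt2, hu]
  have hcu' : c * (1 - u) * u = (0 : ℤ) • (c * (1 - u)) := by
    rw [zero_smul, mul_one_sub_mul_idem alt2 hu]
  have hp := isPeirce_idem_mul alt1 alt2 hu hcu
  have hq := isPeirce_one_sub_idem_mul alt1 alt2 hu hcu
  have hr := isPeirce_idem_mul alt1 alt2 hu hcu'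
  have hs := isPeirce_one_sub_idem_mul alt1 alt2 hu hcu'
  have hc := peirce_decomposition u c
  set p := u * (c * u)
  set q := (1 - u) * (c * u)
  set r := u * (c * (1 - u))
  set s := (1 - u) * (c * (1 - u))
  have hsx : s * x = 0 := (hs.mul alt1 alt2 hx).eq_zero_of_left alt1 tor2 hu (by norm_num)
  have hxp : x * p = 0 := (hx.mul alt1 alt2 hp).eq_zero_of_right alt2 tor2 hu (by norm_num)
  have hpx : p * x = x * s := by
    have h := congrArg (peirceProj₁₂ u) hcx
    rw [← hc] at h
    simp only [add_mul, mul_add, map_add, (hp.mul alt1 alt2 hx).peirceProj₁₂_eq,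
      (hq.mul alt1 alt2 hx).peirceProj₁₂_eq, (hr.mul alt1 alt2 hx).peirceProj₁₂_eq,
      (hx.mul alt1 alt2 hq).peirceProj₁₂_eq, (hx.mul alt1 alt2 hr).peirceProj₁₂_eq,
      (hx.mul alt1 alt2 hs).peirceProj₁₂_eq, hsx, hxp, map_zero] at h
    norm_num at h
    exact h
  rw [add_mul, mul_add, hsx, hxp, add_zero, zero_add, hpx]

theorem peirceE_mul_self {e : R} (he : e * e = e) (i : Fin 2) :
    peirceE e i * peirceE e i = peirceE e i := by
  fin_cases i
  · exact he
  · change (1 - e) * (1 - e) = 1 - e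
    rw [mul_sub, mul_one, sub_mul, one_mul, he, sub_self, sub_zero]

theorem peirceE_of_ne (e : R) {i j : Fin 2} (hij : i ≠ j) : peirceE e j = 1 - peirceE e i := by
  fin_cases i <;> fin_cases j <;> simp_all [peirceE]

theorem isPeirce_of_mem_peirceSet (alt1 : ∀ x y : R, x * x * y = x * (x * y))
    (alt2 : ∀ x y : R, y * x * x = y * (x * x)) {e x : R} (he : e * e = e) {i j : Fin 2}
    (hij : i ≠ j) (hx : x ∈ peirceSet e i j) : IsPeirce (peirceE e i) 1 0 x := by
  obtain ⟨a, rfl⟩ := hx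
  have hu := peirceE_mul_self he i
  rw [peirceE_of_ne e hij]
  exact isPeirce_idem_mul alt1 alt2 hu (by rw [zero_smul, mul_one_sub_mul_idem alt2 hu])

end Alternative

theorem stmt11_general {R : Type*} [NonAssocRing R]
    (alt1 : ∀ x y : R, x * x * y = x * (x * y))
    (alt2 : ∀ x y : R, y * x * x = y * (x * x))
    (tor2 : ∀ x : R, (2 : ℕ) • x = 0 → x = 0)
    (e₁ : R) (he : e₁ * e₁ = e₁)
    (φ : R → R)
    (hcomm : ∀ x : R, φ x * x = x * φ x)
    :
    ∀ i j : Fin 2, i ≠ j → ∀ x ∈ peirceSet e₁ i j,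
      (peirceE e₁ i * (φ x * peirceE e₁ i) + peirceE e₁ j * (φ x * peirceE e₁ j)) * x =
        x * (peirceE e₁ i * (φ x * peirceE e₁ i) + peirceE e₁ j * (φ x * peirceE e₁ j))
    := by
  intro i j hij x hx
  have hux := isPeirce_of_mem_peirceSet alt1 alt2 he hij hx
  rw [peirceE_of_ne e₁ hij]
  exact commute_peirce_diag_of_commute alt1 alt2 tor2 (peirceE_mul_self he i) hux (hcomm x)

theorem stmt11 {R : Type*} [NonAssocRing R]
    (alt1 : ∀ x y : R, x * x * y = x * (x * y))
    (alt2 : ∀ x y : R, y * x * x = y * (x * x))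
    (tor2 : ∀ x : R, (2 : ℕ) • x = 0 → x = 0)
    (tor3 : ∀ x : R, (3 : ℕ) • x = 0 → x = 0)
    (e₁ : R) (he : e₁ * e₁ = e₁) (he0 : e₁ ≠ 0) (he1 : e₁ ≠ 1)
    (hd1 : ∀ x : R, (∀ r : R, x * r * e₁ = 0) → x = 0)
    (hd2 : ∀ x : R, (∀ r : R, x * r * (1 - e₁) = 0) → x = 0)
    (φ : R → R) (hadd : ∀ x y : R, φ (x + y) = φ x + φ y)
    (hcomm : ∀ x : R, φ x * x = x * φ x)
    :
    ∀ i j : Fin 2, i ≠ j → ∀ x ∈ peirceSet e₁ i j,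
      (peirceE e₁ i * (φ x * peirceE e₁ i) + peirceE e₁ j * (φ x * peirceE e₁ j)) * x =
        x * (peirceE e₁ i * (φ x * peirceE e₁ i) + peirceE e₁ j * (φ x * peirceE e₁ j)) :=
  stmt11_general alt1 alt2 tor2 e₁ he φ hcomm
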